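/- arXiv:1403.0078 — 3 statements merged into one kernel-verified Lean document; each statement's English description precedes it below -/
import Mathlib

section
/- Let E ⊆ ℝ^d be a measurable set. Then E and its complement Eᶜ are both equivalent to open subsets of ℝ^d if and only if the essential boundary ∂_e E has Lebesgue measure zero. -/
open MeasureTheory
open scoped ENNReal symmDiff

/-- The set of density points of a set `E ⊆ ℝ^d`:
points where `|B(x,t) ∩ E| / |B(x,t)| → 1` as `t → 0⁺`. -/
def densityPoints {d : ℕ} (E : Set (EuclideanSpace ℝ (Fin d))) :
    Set (EuclideanSpace ℝ (Fin d)) :=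
  {x | Filter.Tendsto (fun t : ℝ => volume (Metric.ball x t ∩ E) / volume (Metric.ball x t))
        (nhdsWithin 0 (Set.Ioi 0)) (nhds 1)}

/-- The essential boundary `∂ₑ E = closure(Eᵈ) ∩ closure((Eᶜ)ᵈ)`. -/
def essBoundary {d : ℕ} (E : Set (EuclideanSpace ℝ (Fin d))) :
    Set (EuclideanSpace ℝ (Fin d)) :=
  closure (densityPoints E) ∩ closure (densityPoints Eᶜ)

/-! Open sets consist of density points, and the density points of `E` and `Eᶜ` are disjoint, so
if `E ≃ U` and `Eᶜ ≃ V` with `U`, `V` open, then `∂ₑE` misses `U ∪ V`, a set of full measure.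
Conversely, by Lebesgue's density theorem `E ≃ Eᵈ` and almost every point lies in `Eᵈ ∪ (Eᶜ)ᵈ`;
hence when `∂ₑE` is null, `Eᵈ` differs from the open set `closure((Eᶜ)ᵈ)ᶜ` by a null set. -/

open Metric Filter Set
open scoped Topology

theorem MeasureTheory.Measure.addHaar_closedBall_ae_eq_ball {X : Type*}
    [NormedAddCommGroup X] [NormedSpace ℝ X] [MeasurableSpace X] [BorelSpace X]
    [FiniteDimensional ℝ X] (μ : Measure X) [μ.IsAddHaarMeasure] (x : X) {r : ℝ}
    (hr : r ≠ 0) : closedBall x r =ᵐ[μ] ball x r := by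
  rw [← measure_symmDiff_eq_zero_iff, symmDiff_of_ge ball_subset_closedBall,
    closedBall_sdiff_ball]
  exact Measure.addHaar_sphere_of_ne_zero μ x hr

section DensityPoints

variable {d : ℕ} {E F U V : Set (EuclideanSpace ℝ (Fin d))}

theorem mem_densityPoints_iff_closedBall (x : EuclideanSpace ℝ (Fin d)) :
    x ∈ densityPoints E ↔
      Tendsto (fun r : ℝ => volume (E ∩ closedBall x r) / volume (closedBall x r))
        (𝓝[>] 0) (𝓝 1) := by
  refine tendsto_congr' ?_
  filter_upwards [self_mem_nhdsWithin] with r (hr : 0 < r)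
  have hball := Measure.addHaar_closedBall_ae_eq_ball volume x hr.ne'
  rw [measure_congr (ae_eq_set_inter (ae_eq_refl E) hball), measure_congr hball, inter_comm]

theorem densityPoints_congr_ae (h : E =ᵐ[volume] F) : densityPoints E = densityPoints F := by
  ext x
  simp only [densityPoints, mem_ofPred_eq,
    fun t : ℝ => measure_congr (ae_eq_set_inter (ae_eq_refl (ball x t)) h)]

theorem IsOpen.subset_densityPoints (hU : IsOpen U) : U ⊆ densityPoints U := by
  intro x hx
  obtain ⟨ε, hε, hball⟩ := Metric.isOpen_iff.1 hU x hx
  refine tendsto_const_nhds.congr' ?_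
  filter_upwards [Ioo_mem_nhdsGT hε] with t ht
  rw [inter_eq_self_of_subset_left ((ball_subset_ball ht.2.le).trans hball),
    ENNReal.div_self (measure_ball_pos volume x ht.1).ne' measure_ball_lt_top.ne]

theorem Disjoint.densityPoints (h : Disjoint E F) (hF : NullMeasurableSet F volume) :
    Disjoint (densityPoints E) (densityPoints F) := by
  refine Set.disjoint_left.2 fun x hxE hxF => ?_
  have hsum_le : ∀ᶠ t in 𝓝[>] (0 : ℝ), volume (ball x t ∩ E) / volume (ball x t)
      + volume (ball x t ∩ F) / volume (ball x t) ≤ 1 := by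
    filter_upwards [self_mem_nhdsWithin] with t (ht : 0 < t)
    have hunion :
        volume (ball x t ∩ E) + volume (ball x t ∩ F) = volume (ball x t ∩ (E ∪ F)) := by
      rw [inter_union_distrib_left, measure_union₀ (measurableSet_ball.nullMeasurableSet.inter hF)
        (h.mono inter_subset_right inter_subset_right).aedisjoint]
    rw [ENNReal.div_add_div_same, hunion,
      ← ENNReal.div_self (measure_ball_pos volume x ht).ne' measure_ball_lt_top.ne]
    exact ENNReal.div_le_div_right (measure_mono inter_subset_left) _
  exact absurd (le_of_tendsto (hxE.add hxF) hsum_le) (by norm_num)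

theorem densityPoints_ae_eq (hE : MeasurableSet E) : densityPoints E =ᵐ[volume] E := by
  filter_upwards [Besicovitch.ae_tendsto_measure_inter_div_of_measurableSet volume hE]
    with x hx
  refine propext ?_
  change x ∈ densityPoints E ↔ x ∈ E
  rw [mem_densityPoints_iff_closedBall]
  refine ⟨fun h => by_contra fun hxE => ?_, fun hxE => by simpa [hxE] using hx⟩
  rw [indicator_of_notMem hxE] at hx
  exact one_ne_zero (tendsto_nhds_unique h hx)

theorem measure_compl_densityPoints_union_densityPoints_compl (hE : MeasurableSet E) :
    volume (densityPoints E ∪ densityPoints Eᶜ)ᶜ = 0 := by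
  rw [← ae_eq_univ, ← union_compl_self E]
  exact ae_eq_set_union (densityPoints_ae_eq hE) (densityPoints_ae_eq hE.compl)

theorem essBoundary_compl : essBoundary Eᶜ = essBoundary E := by
  rw [essBoundary, essBoundary, compl_compl, inter_comm]

theorem disjoint_closure_densityPoints_of_compl_ae_eq (hU : IsOpen U) (hEU : Eᶜ =ᵐ[volume] U) :
    Disjoint (closure (densityPoints E)) U := by
  have hE : NullMeasurableSet E volume :=
    NullMeasurableSet.compl_iff.1 (hU.measurableSet.nullMeasurableSet.congr hEU.symm)
  refine Disjoint.closure_left ?_ hU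
  exact (disjoint_compl_right.densityPoints hE.compl).mono_right
    ((densityPoints_congr_ae hEU).symm ▸ hU.subset_densityPoints)

theorem measure_essBoundary_eq_zero_of_ae_eq_isOpen (hU : IsOpen U) (hEU : E =ᵐ[volume] U)
    (hV : IsOpen V) (hEV : Eᶜ =ᵐ[volume] V) : volume (essBoundary E) = 0 := by
  have hdU : Disjoint (closure (densityPoints Eᶜ)) U :=
    disjoint_closure_densityPoints_of_compl_ae_eq hU ((compl_compl E).symm ▸ hEU)
  have hdV : Disjoint (closure (densityPoints E)) V :=
    disjoint_closure_densityPoints_of_compl_ae_eq hV hEV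
  have hsub : essBoundary E ⊆ (U ∪ V)ᶜ := subset_compl_iff_disjoint_right.2 <|
    disjoint_union_right.2 ⟨hdU.mono_left inter_subset_right, hdV.mono_left inter_subset_left⟩
  refine measure_mono_null hsub (ae_eq_univ.1 ?_)
  rw [← union_compl_self E]
  exact (ae_eq_set_union hEU hEV).symm

theorem exists_isOpen_ae_eq_of_measure_essBoundary_eq_zero (hE : MeasurableSet E)
    (h : volume (essBoundary E) = 0) : ∃ U, IsOpen U ∧ E =ᵐ[volume] U := by
  have hd : densityPoints E =ᵐ[volume] (closure (densityPoints Eᶜ))ᶜ := by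
    refine ae_eq_set.2 ⟨measure_mono_null ?_ h,
      measure_mono_null ?_ (measure_compl_densityPoints_union_densityPoints_compl hE)⟩
    · exact fun x ⟨hx, hxc⟩ => ⟨subset_closure hx, not_not.1 hxc⟩
    · exact fun x ⟨hxc, hx⟩ hxs => hxs.elim hx fun hx' => hxc (subset_closure hx')
  exact ⟨_, isClosed_closure.isOpen_compl, (densityPoints_ae_eq hE).symm.trans hd⟩

end DensityPoints

/-- A measurable set and its complement are both equivalent to open sets iff the
essential boundary has Lebesgue measure zero. -/
theorem equiv_open_iff_essBoundary_null {d : ℕ}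
    (E : Set (EuclideanSpace ℝ (Fin d))) (hE : MeasurableSet E) :
    ((∃ U : Set (EuclideanSpace ℝ (Fin d)), IsOpen U ∧ volume (E ∆ U) = 0) ∧
     (∃ V : Set (EuclideanSpace ℝ (Fin d)), IsOpen V ∧ volume (Eᶜ ∆ V) = 0)) ↔
    volume (essBoundary E) = 0 := by
  simp only [measure_symmDiff_eq_zero_iff]
  constructor
  · rintro ⟨⟨U, hU, hEU⟩, V, hV, hEV⟩
    exact measure_essBoundary_eq_zero_of_ae_eq_isOpen hU hEU hV hEV
  · intro h
    exact ⟨exists_isOpen_ae_eq_of_measure_essBoundary_eq_zero hE h,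
      exists_isOpen_ae_eq_of_measure_essBoundary_eq_zero hE.compl (by rwa [essBoundary_compl])⟩
end

section
/- Let p, q ∈ [1,∞] and r ∈ [1,∞) satisfy 1/p + 1/q = 1/r. Suppose there is a constant C > 0 such that for every N ∈ ℕ and every sequence (ε_1, …, ε_N) ∈ {0,1}^N, the function on ℤ equal to ε_n at n ∈ {1,…,N} and 0 elsewhere is a bilinear multiplier symbol on 𝕋 for (p,q,r) with constant C. Then there exists a constant C′ > 0 such that for all trigonometric polynomials P, Q on 𝕋, ‖(Σ_{n≥1} |S_n(P,Q)|²)^{1/2}‖_{L^r(𝕋)} ≤ C′ ‖P‖_{L^p(𝕋)} ‖Q‖_{L^q(𝕋)}, where S_n(P,Q)(x) = Σ_{k,l∈ℤ, k−l=n} P̂(k) Q̂(l) e^{2πi(k+l)x}. -/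
open MeasureTheory Complex
open scoped ENNReal

/-- The trigonometric polynomial on the torus with finitely supported coefficient
function `a : ℤ →₀ ℂ`, viewed as a `1`-periodic function on `ℝ`. -/
noncomputable def trigPoly (a : ℤ →₀ ℂ) : ℝ → ℂ := fun x =>
  ∑ n ∈ a.support, a n * Complex.exp (2 * Real.pi * Complex.I * (n : ℂ) * (x : ℂ))

/-- The Haar measure of the torus `𝕋`, realized as Lebesgue measure on one period `[0,1)`. -/
noncomputable def torusMeasure : Measure ℝ := volume.restrict (Set.Ico (0 : ℝ) 1)

/-- `m(n-k)` is a bilinear multiplier symbol on the torus `𝕋` for `(p,q,r)` with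
constant `C`. -/
def IsBilinearMultiplierTorus (m : ℤ → ℂ) (p q r : ℝ≥0∞) (C : ℝ) : Prop :=
  ∀ a b : ℤ →₀ ℂ,
    eLpNorm (fun x : ℝ => ∑ n ∈ a.support, ∑ k ∈ b.support,
        a n * b k * m (n - k) *
          Complex.exp (2 * Real.pi * Complex.I * ((n : ℂ) + (k : ℂ)) * (x : ℂ)))
      r torusMeasure ≤
    ENNReal.ofReal C * eLpNorm (trigPoly a) p torusMeasure *
      eLpNorm (trigPoly b) q torusMeasure

/-- The `n`-th piece `Sₙ(P,Q)` of the bilinear Littlewood–Paley decomposition on the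
torus: the bilinear multiplier operator with symbol the indicator of `{n}`. -/
noncomputable def SnOp (a b : ℤ →₀ ℂ) (n : ℤ) : ℝ → ℂ := fun x =>
  ∑ k ∈ a.support, ∑ l ∈ b.support,
    if k - l = n then
      a k * b l * Complex.exp (2 * Real.pi * Complex.I * ((k : ℂ) + (l : ℂ)) * (x : ℂ))
    else 0

/-!
Khintchine's inequality with constant `√3` (from the exact second moment and the fourth-moment
bound `E|Σ ±cᵢ|⁴ ≤ 3 (Σ |cᵢ|²)²`, interpolated by Hölder) dominates the square function
`(Σₙ |Sₙ(P,Q)|²)^{1/2}` pointwise by `√3` times the average over signs of `|Σₙ ±Sₙ(P,Q)|`. Only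
finitely many `Sₙ(P,Q)` are nonzero, and every signed sum `Σ ±Sₙ` is `2 T_δ - T_1`, where
`T_δ` is the bilinear multiplier with a `0`-`1` symbol; so each has `L^r` norm at most
`3C ‖P‖_p ‖Q‖_q`, and Minkowski's inequality in `L^r` (`r ≥ 1`) concludes.
-/

open Finset RealInnerProductSpace

lemma sum_sq_pow_three_le_sq_sum_mul_sum_pow_four {ι : Type*} (s : Finset ι) {f : ι → ℝ}
    (hf : ∀ i ∈ s, 0 ≤ f i) :
    (∑ i ∈ s, f i ^ 2) ^ 3 ≤ (∑ i ∈ s, f i) ^ 2 * ∑ i ∈ s, f i ^ 4 := by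
  have h13 : (∑ i ∈ s, f i ^ 2) ^ 2 ≤ (∑ i ∈ s, f i) * ∑ i ∈ s, f i ^ 3 :=
    sum_sq_le_sum_mul_sum_of_sq_le_mul s hf (fun i hi => pow_nonneg (hf i hi) 3)
      fun i _ => le_of_eq (by ring)
  have h24 : (∑ i ∈ s, f i ^ 3) ^ 2 ≤ (∑ i ∈ s, f i ^ 2) * ∑ i ∈ s, f i ^ 4 :=
    sum_sq_le_sum_mul_sum_of_sq_le_mul s (fun i hi => pow_nonneg (hf i hi) 2)
      (fun i hi => pow_nonneg (hf i hi) 4) fun i _ => le_of_eq (by ring)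
  obtain h0 | hpos := (sum_nonneg fun i hi => pow_nonneg (hf i hi) 2).eq_or_lt
  · rw [← h0, zero_pow three_ne_zero]
    exact mul_nonneg (sq_nonneg _) (sum_nonneg fun i hi => pow_nonneg (hf i hi) 4)
  · refine le_of_mul_le_mul_left ?_ hpos
    calc (∑ i ∈ s, f i ^ 2) * (∑ i ∈ s, f i ^ 2) ^ 3 = ((∑ i ∈ s, f i ^ 2) ^ 2) ^ 2 := by ring
      _ ≤ ((∑ i ∈ s, f i) * ∑ i ∈ s, f i ^ 3) ^ 2 := by gcongr
      _ = (∑ i ∈ s, f i) ^ 2 * (∑ i ∈ s, f i ^ 3) ^ 2 := by ring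
      _ ≤ (∑ i ∈ s, f i) ^ 2 * ((∑ i ∈ s, f i ^ 2) * ∑ i ∈ s, f i ^ 4) := by gcongr
      _ = _ := by ring

section Khintchine

variable {E : Type*}

def signedSum [AddCommGroup E] {N : ℕ} (c : Fin N → E) (ε : Fin N → Bool) : E :=
  ∑ i, if ε i then c i else -c i

lemma signedSum_cons [AddCommGroup E] {N : ℕ} (c : Fin (N + 1) → E) (b : Bool)
    (ε : Fin N → Bool) :
    signedSum c (Fin.cons b ε) = (if b then c 0 else -c 0) + signedSum (Fin.tail c) ε := by
  simp [signedSum, Fin.sum_univ_succ, Fin.tail]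

lemma sum_bool_pi_fin_succ {M : Type*} [AddCommMonoid M] {N : ℕ} (F : (Fin (N + 1) → Bool) → M) :
    ∑ ε, F ε = ∑ ε : Fin N → Bool, (F (Fin.cons true ε) + F (Fin.cons false ε)) := by
  rw [← (Fin.consEquiv fun _ => Bool).sum_comp, Fintype.sum_prod_type, Fintype.sum_bool,
    ← sum_add_distrib]
  rfl

variable [NormedAddCommGroup E] [InnerProductSpace ℝ E]

lemma norm_add_pow_four_add_norm_sub_pow_four_le (x y : E) :
    ‖x + y‖ ^ 4 + ‖x - y‖ ^ 4 ≤ 2 * (‖x‖ ^ 4 + 6 * ‖x‖ ^ 2 * ‖y‖ ^ 2 + ‖y‖ ^ 4) := by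
  have hxy : ⟪x, y⟫ ^ 2 ≤ ‖x‖ ^ 2 * ‖y‖ ^ 2 := by
    rw [← mul_pow]
    exact sq_le_sq.mpr ((abs_real_inner_le_norm x y).trans (le_abs_self _))
  have h4 : ∀ z : E, ‖z‖ ^ 4 = (‖z‖ ^ 2) ^ 2 := fun z => by ring
  rw [h4 (x + y), h4 (x - y), norm_add_sq_real, norm_sub_sq_real]
  nlinarith [hxy]

lemma sum_norm_signedSum_sq {N : ℕ} (c : Fin N → E) :
    ∑ ε, ‖signedSum c ε‖ ^ 2 = 2 ^ N * ∑ i, ‖c i‖ ^ 2 := by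
  induction N with
  | zero => simp [signedSum]
  | succ N ih =>
    have hpar := fun x y : E => parallelogram_law_with_norm ℝ x y
    simp only [sum_bool_pi_fin_succ, signedSum_cons, if_true, Bool.false_eq_true, if_false,
      add_comm (c 0), neg_add_eq_sub, hpar, ← mul_sum, sum_add_distrib,
      ih, Fin.sum_univ_succ (fun i => ‖c i‖ ^ 2)]
    simp only [sum_const, card_univ, Fintype.card_fun, Fintype.card_bool, Fintype.card_fin,
      nsmul_eq_mul, Fin.tail]
    push_cast
    ring

lemma sum_norm_signedSum_pow_four_le {N : ℕ} (c : Fin N → E) :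
    ∑ ε, ‖signedSum c ε‖ ^ 4 ≤ 3 * 2 ^ N * (∑ i, ‖c i‖ ^ 2) ^ 2 := by
  induction N with
  | zero => simp [signedSum]
  | succ N ih =>
    set A := ∑ i, ‖Fin.tail c i‖ ^ 2
    calc ∑ ε, ‖signedSum c ε‖ ^ 4
        ≤ ∑ ε : Fin N → Bool, 2 * (‖signedSum (Fin.tail c) ε‖ ^ 4
            + 6 * ‖signedSum (Fin.tail c) ε‖ ^ 2 * ‖c 0‖ ^ 2 + ‖c 0‖ ^ 4) := by
          rw [sum_bool_pi_fin_succ]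
          gcongr with ε
          simpa only [signedSum_cons, if_true, Bool.false_eq_true, if_false, add_comm (c 0),
            neg_add_eq_sub] using
            norm_add_pow_four_add_norm_sub_pow_four_le (signedSum (Fin.tail c) ε) (c 0)
      _ ≤ 2 * (3 * 2 ^ N * A ^ 2 + 6 * (2 ^ N * A) * ‖c 0‖ ^ 2 + 2 ^ N * ‖c 0‖ ^ 4) := by
          rw [← mul_sum, sum_add_distrib, sum_add_distrib, ← sum_mul, ← mul_sum,
            sum_norm_signedSum_sq]
          simp only [sum_const, card_univ, Fintype.card_fun, Fintype.card_bool,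
            Fintype.card_fin, nsmul_eq_mul]
          push_cast
          gcongr
          exact ih _
      _ ≤ 3 * 2 ^ (N + 1) * (∑ i, ‖c i‖ ^ 2) ^ 2 := by
          have hsplit : ∑ i, ‖c i‖ ^ 2 = ‖c 0‖ ^ 2 + A := Fin.sum_univ_succ _
          have : (0:ℝ) ≤ 2 ^ N * ‖c 0‖ ^ 4 := by positivity
          rw [hsplit, pow_succ (2 : ℝ) N]
          nlinarith

theorem sqrt_sum_norm_sq_le_sum_norm_signedSum {N : ℕ} (c : Fin N → E) :
    √(∑ i, ‖c i‖ ^ 2) ≤ √3 / 2 ^ N * ∑ ε, ‖signedSum c ε‖ := by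
  set A := ∑ i, ‖c i‖ ^ 2
  set S := ∑ ε, ‖signedSum c ε‖
  have hA : 0 ≤ A := by positivity
  have hmoments : (2 ^ N * A) ^ 3 ≤ S ^ 2 * (3 * 2 ^ N * A ^ 2) := by
    rw [← sum_norm_signedSum_sq]
    exact (sum_sq_pow_three_le_sq_sum_mul_sum_pow_four _ fun ε _ => norm_nonneg _).trans
      (by gcongr; exact sum_norm_signedSum_pow_four_le c)
  have hkey : (2 ^ N) ^ 2 * A ≤ 3 * S ^ 2 := by
    obtain h0 | hApos := hA.eq_or_lt
    · rw [← h0, mul_zero]; positivity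
    · have : 0 < (2:ℝ) ^ N * A ^ 2 := by positivity
      nlinarith
  rw [Real.sqrt_le_left (by positivity), mul_pow, div_pow, Real.sq_sqrt zero_le_three,
    div_mul_eq_mul_div, le_div_iff₀ (by positivity)]
  linarith

end Khintchine

section LpBounds

variable {α E : Type*} [MeasurableSpace α] {μ : Measure α} {r : ℝ≥0∞} {N : ℕ}

lemma eLpNorm_signedSum_le [NormedAddCommGroup E] (hr : 1 ≤ r) {f : Fin N → α → E}
    (hf : ∀ i, AEStronglyMeasurable (f i) μ) {B : ℝ≥0∞}
    (hB : ∀ δ : Fin N → Bool, eLpNorm (fun x => ∑ i, if δ i then f i x else 0) r μ ≤ B)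
    (ε : Fin N → Bool) :
    eLpNorm (fun x => signedSum (fun i => f i x) ε) r μ ≤ 3 * B := by
  set g : (Fin N → Bool) → α → E := fun δ x => ∑ i, if δ i then f i x else 0
  have hg : ∀ δ, AEStronglyMeasurable (g δ) μ := fun δ =>
    Finset.aestronglyMeasurable_fun_sum _ fun i _ => by
      by_cases h : δ i <;> simp [h, hf i, aestronglyMeasurable_const]
  have hsplit : (fun x => signedSum (fun i => f i x) ε) = g ε + g ε - g fun _ => true := by
    ext x
    simp only [signedSum, g, Pi.add_apply, Pi.sub_apply, if_true, ← sum_add_distrib,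
      ← sum_sub_distrib]
    refine sum_congr rfl fun i _ => ?_
    split_ifs <;> abel
  calc eLpNorm (fun x => signedSum (fun i => f i x) ε) r μ
      ≤ eLpNorm (g ε) r μ + eLpNorm (g ε) r μ + eLpNorm (g fun _ => true) r μ := by
        rw [hsplit]
        refine (eLpNorm_sub_le ((hg ε).add (hg ε)) (hg _) hr).trans ?_
        gcongr
        exact eLpNorm_add_le (hg ε) (hg ε) hr
    _ ≤ B + B + B := by gcongr <;> exact hB _
    _ = 3 * B := by ring

lemma eLpNorm_sqrt_sum_norm_sq_le [NormedAddCommGroup E] [InnerProductSpace ℝ E] (hr : 1 ≤ r)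
    {f : Fin N → α → E} (hf : ∀ i, AEStronglyMeasurable (f i) μ) {B : ℝ≥0∞}
    (hB : ∀ ε, eLpNorm (fun x => signedSum (fun i => f i x) ε) r μ ≤ B) :
    eLpNorm (fun x => √(∑ i, ‖f i x‖ ^ 2)) r μ ≤ ENNReal.ofReal √3 * B := by
  set g : (Fin N → Bool) → α → E := fun ε x => signedSum (fun i => f i x) ε
  have hg : ∀ ε, AEStronglyMeasurable (g ε) μ := fun ε =>
    Finset.aestronglyMeasurable_fun_sum _ fun i _ => by
      by_cases h : ε i
      · simpa [h] using hf i
      · simp only [h, Bool.false_eq_true, if_false]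
        exact (hf i).neg
  set K : ℝ := √3 / 2 ^ N
  calc eLpNorm (fun x => √(∑ i, ‖f i x‖ ^ 2)) r μ
      ≤ eLpNorm (K • ∑ ε, fun x => ‖g ε x‖) r μ := by
        refine eLpNorm_mono_real fun x => ?_
        simpa [Real.norm_eq_abs, abs_of_nonneg (Real.sqrt_nonneg _), g] using
          sqrt_sum_norm_sq_le_sum_norm_signedSum fun i => f i x
    _ ≤ ENNReal.ofReal K * ∑ ε, eLpNorm (g ε) r μ := by
        rw [eLpNorm_const_smul, Real.enorm_of_nonneg (by positivity)]
        gcongr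
        refine (eLpNorm_sum_le (fun ε _ => (hg ε).norm) hr).trans_eq ?_
        simp only [eLpNorm_norm]
    _ ≤ ENNReal.ofReal K * (2 ^ N * B) := by
        gcongr
        refine (sum_le_card_nsmul _ _ _ fun ε _ => hB ε).trans_eq ?_
        simp [nsmul_eq_mul]
    _ = ENNReal.ofReal √3 * B := by
        have h2N : (2 : ℝ≥0∞) ^ N = ENNReal.ofReal (2 ^ N) := by
          rw [ENNReal.ofReal_pow zero_le_two, ENNReal.ofReal_ofNat]
        rw [← mul_assoc, h2N, ← ENNReal.ofReal_mul (by positivity),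
          div_mul_cancel₀ _ (by positivity)]

end LpBounds

noncomputable def bilinearMultiplierOp (m : ℤ → ℂ) (a b : ℤ →₀ ℂ) : ℝ → ℂ := fun x =>
  ∑ n ∈ a.support, ∑ k ∈ b.support,
    a n * b k * m (n - k) * Complex.exp (2 * Real.pi * Complex.I * ((n : ℂ) + (k : ℂ)) * (x : ℂ))

lemma bilinearMultiplierOp_eq_sum_SnOp {m : ℤ → ℂ} {s : Finset ℤ} (hm : ∀ n ∉ s, m n = 0)
    (a b : ℤ →₀ ℂ) (x : ℝ) :
    bilinearMultiplierOp m a b x = ∑ n ∈ s, m n * SnOp a b n x := by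
  simp only [bilinearMultiplierOp, SnOp, mul_sum]
  symm
  rw [sum_comm]
  refine sum_congr rfl fun k _ => ?_
  rw [sum_comm]
  refine sum_congr rfl fun l _ => ?_
  simp only [mul_ite, mul_zero, sum_ite_eq]
  split_ifs with hkl
  · ring
  · rw [hm _ hkl, mul_zero, zero_mul]

lemma bilinearMultiplierOp_indicator_eq_sum_SnOp (N : ℕ) (eps : ℕ → ℂ) (a b : ℤ →₀ ℂ)
    (x : ℝ) :
    bilinearMultiplierOp (fun z : ℤ => if 1 ≤ z ∧ z ≤ (N : ℤ) then eps z.toNat else 0) a b x =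
      ∑ i : Fin N, eps (i + 1) * SnOp a b ((i : ℤ) + 1) x := by
  rw [bilinearMultiplierOp_eq_sum_SnOp (s := univ.image fun i : Fin N => (i : ℤ) + 1),
    sum_image fun i _ j _ hij => by ext; simpa using hij]
  · refine sum_congr rfl fun i _ => ?_
    rw [if_pos (by omega)]
    congr 2
  · intro z hz
    rw [if_neg]
    rintro ⟨h1, hN⟩
    exact hz (mem_image.mpr ⟨⟨(z - 1).toNat, by omega⟩, mem_univ _, by simp; omega⟩)

lemma exists_SnOp_eq_zero_of_lt (a b : ℤ →₀ ℂ) :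
    ∃ N : ℕ, ∀ n : ℤ, (N : ℤ) < n → SnOp a b n = 0 := by
  refine ⟨(a.support ×ˢ b.support).sup fun kl => (kl.1 - kl.2).toNat, fun n hn => ?_⟩
  funext x
  refine sum_eq_zero fun k hk => sum_eq_zero fun l hl => if_neg fun hkl => ?_
  have := le_sup (f := fun kl : ℤ × ℤ => (kl.1 - kl.2).toNat) (b := (k, l))
    (mem_product.mpr ⟨hk, hl⟩)
  omega

lemma continuous_SnOp (a b : ℤ →₀ ℂ) (n : ℤ) : Continuous (SnOp a b n) := by
  unfold SnOp
  refine continuous_finsetSum _ fun k _ => continuous_finsetSum _ fun l _ => ?_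
  split_ifs
  · fun_prop
  · exact continuous_const

lemma eLpNorm_sum_ite_SnOp_le {p q r : ℝ≥0∞} {C : ℝ} {N : ℕ}
    (hm : ∀ eps : ℕ → ℂ, (∀ n, eps n = 0 ∨ eps n = 1) →
      IsBilinearMultiplierTorus
        (fun z : ℤ => if 1 ≤ z ∧ z ≤ (N : ℤ) then eps z.toNat else 0) p q r C)
    (a b : ℤ →₀ ℂ) (δ : Fin N → Bool) :
    eLpNorm (fun x => ∑ i : Fin N, if δ i then SnOp a b ((i : ℤ) + 1) x else 0) r torusMeasure ≤
      ENNReal.ofReal C * eLpNorm (trigPoly a) p torusMeasure *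
        eLpNorm (trigPoly b) q torusMeasure := by
  let eps : ℕ → ℂ := fun n => if ∃ i : Fin N, (i : ℕ) + 1 = n ∧ δ i then 1 else 0
  have heps : ∀ i : Fin N, eps (i + 1) = if δ i then 1 else 0 := fun i => by
    by_cases hδ : δ i <;> simp [eps, hδ, Fin.val_inj]
  have hsum : (fun x => ∑ i : Fin N, if δ i then SnOp a b ((i : ℤ) + 1) x else 0) =
      bilinearMultiplierOp (fun z : ℤ => if 1 ≤ z ∧ z ≤ (N : ℤ) then eps z.toNat else 0) a b := by
    funext x
    simp [bilinearMultiplierOp_indicator_eq_sum_SnOp, heps]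
  have heps01 : ∀ n, eps n = 0 ∨ eps n = 1 := fun n => by
    by_cases h : ∃ i : Fin N, (i : ℕ) + 1 = n ∧ δ i <;> simp [eps, h]
  rw [hsum]
  exact hm eps heps01 a b

theorem torus_squareFunction_bound_general (p q r : ℝ≥0∞)
    (hr : 1 ≤ r)
    (h : ∃ C : ℝ, 0 < C ∧ ∀ N : ℕ, ∀ eps : ℕ → ℂ, (∀ n, eps n = 0 ∨ eps n = 1) →
      IsBilinearMultiplierTorus
        (fun z : ℤ => if 1 ≤ z ∧ z ≤ (N : ℤ) then eps z.toNat else 0) p q r C) :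
    ∃ C' : ℝ, 0 < C' ∧ ∀ a b : ℤ →₀ ℂ,
      eLpNorm (fun x : ℝ => Real.sqrt (∑' n : ℕ, ‖SnOp a b ((n : ℤ) + 1) x‖ ^ 2))
          r torusMeasure ≤
        ENNReal.ofReal C' * eLpNorm (trigPoly a) p torusMeasure *
          eLpNorm (trigPoly b) q torusMeasure := by
  obtain ⟨C, hC, hmul⟩ := h
  refine ⟨3 * √3 * C, by positivity, fun a b => ?_⟩
  obtain ⟨N, hN⟩ := exists_SnOp_eq_zero_of_lt a b
  have hfinite : ∀ x, ∑' n : ℕ, ‖SnOp a b ((n : ℤ) + 1) x‖ ^ 2 =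
      ∑ i : Fin N, ‖SnOp a b ((i : ℤ) + 1) x‖ ^ 2 := fun x => by
    rw [tsum_eq_sum (s := range N) fun n hn => by
      rw [hN _ (by rw [mem_range] at hn; omega), Pi.zero_apply, norm_zero, zero_pow two_ne_zero]]
    exact (Fin.sum_univ_eq_sum_range (fun n => ‖SnOp a b ((n : ℤ) + 1) x‖ ^ 2) N).symm
  have hmeas : ∀ i : Fin N, AEStronglyMeasurable (SnOp a b ((i : ℤ) + 1)) torusMeasure :=
    fun i => (continuous_SnOp a b _).aestronglyMeasurable
  simp_rw [hfinite]
  calc _ ≤ ENNReal.ofReal √3 * (3 * (ENNReal.ofReal C * eLpNorm (trigPoly a) p torusMeasure *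
          eLpNorm (trigPoly b) q torusMeasure)) :=
        eLpNorm_sqrt_sum_norm_sq_le hr hmeas
          (eLpNorm_signedSum_le hr hmeas (eLpNorm_sum_ite_SnOp_le (hmul N) a b))
    _ = _ := by
        rw [ENNReal.ofReal_mul (by positivity), ENNReal.ofReal_mul (by positivity),
          ENNReal.ofReal_ofNat]
        ring

/-- If every 0-1 sequence supported on $\{1,…,N\}$ is a bilinear multiplier symbol on
$𝕋$ with a uniform constant, then (by Khintchine's inequality) the bilinear
Littlewood–Paley square function is bounded. -/
theorem torus_squareFunction_bound (p q r : ℝ≥0∞)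
    (hp : 1 ≤ p) (hq : 1 ≤ q) (hr : 1 ≤ r) (hrtop : r ≠ ⊤)
    (hpqr : 1 / p + 1 / q = 1 / r)
    (h : ∃ C : ℝ, 0 < C ∧ ∀ N : ℕ, ∀ eps : ℕ → ℂ, (∀ n, eps n = 0 ∨ eps n = 1) →
      IsBilinearMultiplierTorus
        (fun z : ℤ => if 1 ≤ z ∧ z ≤ (N : ℤ) then eps z.toNat else 0) p q r C) :
    ∃ C' : ℝ, 0 < C' ∧ ∀ a b : ℤ →₀ ℂ,
      eLpNorm (fun x : ℝ => Real.sqrt (∑' n : ℕ, ‖SnOp a b ((n : ℤ) + 1) x‖ ^ 2))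
          r torusMeasure ≤
        ENNReal.ofReal C' * eLpNorm (trigPoly a) p torusMeasure *
          eLpNorm (trigPoly b) q torusMeasure :=
  torus_squareFunction_bound_general p q r hr h
end

section
/- Let p, q ∈ [1,∞) and r ∈ [1,∞) satisfy 1/p + 1/q = 1/r. If there exists a constant C > 0 such that for all trigonometric polynomials P, Q on 𝕋, ‖(Σ_{n∈ℤ} |S_n(P,Q)|²)^{1/2}‖_{L^r(𝕋)} ≤ C ‖P‖_{L^p(𝕋)} ‖Q‖_{L^q(𝕋)}, where S_n(P,Q)(x) = Σ_{k,l∈ℤ, k−l=n} P̂(k) Q̂(l) e^{2πi(k+l)x}, then necessarily p ≥ 2 and q ≥ 2. -/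
open MeasureTheory Complex
open scoped ENNReal

/-! Testing the square function against the constant polynomial `1` in one slot gives
`S(P, 1) = ‖P̂‖_{ℓ²} = ‖P‖_{L²}` pointwise, so the hypothesis yields `‖P‖₂ ≤ C ‖P‖_p` for every
trigonometric polynomial, and symmetrically for `q`. This fails for `p < 2` on the Fejér kernels
`K_N = |∑_{k<N} e_k|²`: from `‖K_N‖_∞ ≤ N²` and `‖K_N‖₁ = N` one gets `‖K_N‖_p ≤ N^{2 - 1/p}`,
while Cauchy–Schwarz over the `2N - 1` frequencies of `K_N`, whose coefficients add up to
`K_N(0) = N²`, gives `‖K̂_N‖_{ℓ²} ≥ N^{3/2} / √2`. -/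

open Finset Filter
open scoped NNReal

noncomputable def torusChar (n : ℤ) (x : ℝ) : ℂ :=
  Complex.exp (2 * Real.pi * Complex.I * (n : ℂ) * (x : ℂ))

instance : IsProbabilityMeasure torusMeasure := ⟨by simp [torusMeasure]⟩

lemma continuous_torusChar (n : ℤ) : Continuous (torusChar n) := by
  unfold torusChar; fun_prop

@[simp] lemma norm_torusChar (n : ℤ) (x : ℝ) : ‖torusChar n x‖ = 1 := by
  rw [torusChar, Complex.norm_exp]
  simp [Complex.mul_re, Complex.mul_im]

@[simp] lemma torusChar_zero_left (x : ℝ) : torusChar 0 x = 1 := by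
  simp [torusChar]

@[simp] lemma torusChar_zero_right (n : ℤ) : torusChar n 0 = 1 := by
  simp [torusChar]

lemma torusChar_mul_conj (k l : ℤ) (x : ℝ) :
    torusChar k x * starRingEnd ℂ (torusChar l x) = torusChar (k - l) x := by
  rw [torusChar, torusChar, torusChar, ← Complex.exp_conj, ← Complex.exp_add]
  congr 1
  simp only [map_mul, Complex.conj_I, Complex.conj_ofReal, map_ofNat, map_intCast]
  push_cast
  ring

lemma integrable_torusChar (n : ℤ) : Integrable (torusChar n) torusMeasure :=
  .of_bound (continuous_torusChar n).aestronglyMeasurable 1 (by simp)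

lemma integral_torusChar (n : ℤ) :
    ∫ x, torusChar n x ∂torusMeasure = if n = 0 then 1 else 0 := by
  rw [torusMeasure, integral_Ico_eq_integral_Ioc, ← intervalIntegral.integral_of_le zero_le_one]
  split_ifs with hn
  · simp [hn, torusChar]
  · have hc : 2 * Real.pi * Complex.I * n ≠ 0 := by simp [Real.pi_ne_zero, hn]
    simp only [torusChar, integral_exp_mul_complex hc, Complex.ofReal_one, mul_one,
      Complex.ofReal_zero, mul_zero, Complex.exp_zero]
    rw [show 2 * Real.pi * Complex.I * n = n * (2 * Real.pi * Complex.I) by ring,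
      Complex.exp_int_mul_two_pi_mul_I, sub_self, zero_div]

lemma trigPoly_eq_sum (a : ℤ →₀ ℂ) (x : ℝ) :
    trigPoly a x = a.sum fun n c => c * torusChar n x := rfl

lemma trigPoly_zero_right (a : ℤ →₀ ℂ) : trigPoly a 0 = ∑ n ∈ a.support, a n := by
  simp [trigPoly_eq_sum, Finsupp.sum]

lemma trigPoly_single (n : ℤ) (c : ℂ) (x : ℝ) :
    trigPoly (Finsupp.single n c) x = c * torusChar n x := by
  simp [trigPoly_eq_sum]

lemma trigPoly_finsetSum {ι : Type*} (s : Finset ι) (a : ι → ℤ →₀ ℂ) (x : ℝ) :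
    trigPoly (∑ i ∈ s, a i) x = ∑ i ∈ s, trigPoly (a i) x := by
  simp only [trigPoly_eq_sum]
  exact (Finsupp.sum_finsetSum_index (fun _ => zero_mul _) fun _ _ _ => add_mul _ _ _).symm

lemma integrable_trigPoly (a : ℤ →₀ ℂ) : Integrable (trigPoly a) torusMeasure :=
  integrable_finsetSum _ fun n _ => (integrable_torusChar n).const_mul _

lemma integral_trigPoly (a : ℤ →₀ ℂ) : ∫ x, trigPoly a x ∂torusMeasure = a 0 := by
  change ∫ x, ∑ n ∈ a.support, a n * torusChar n x ∂torusMeasure = a 0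
  rw [integral_finsetSum _ fun n _ => (integrable_torusChar n).const_mul _]
  simp [integral_const_mul, integral_torusChar, eq_comm]

lemma sq_norm_sum_support_le_card_mul_tsum {ι E : Type*} [NormedAddCommGroup E] (a : ι →₀ E) :
    ‖∑ n ∈ a.support, a n‖ ^ 2 ≤ #a.support * ∑' n, ‖a n‖ ^ 2 := by
  rw [tsum_eq_sum fun n hn => by rw [Finsupp.notMem_support_iff.mp hn, norm_zero, sq, zero_mul]]
  calc ‖∑ n ∈ a.support, a n‖ ^ 2 ≤ (∑ n ∈ a.support, ‖a n‖) ^ 2 := by gcongr; exact norm_sum_le _ _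
    _ ≤ #a.support * ∑ n ∈ a.support, ‖a n‖ ^ 2 := sq_sum_le_card_mul_sum_sq

noncomputable def charSum (N : ℕ) (x : ℝ) : ℂ := ∑ k ∈ range N, torusChar k x

lemma norm_charSum_le (N : ℕ) (x : ℝ) : ‖charSum N x‖ ≤ N :=
  (norm_sum_le _ _).trans (by simp)

@[simp] lemma charSum_zero_right (N : ℕ) : charSum N 0 = N := by simp [charSum]

noncomputable def fejerCoeffs (N : ℕ) : ℤ →₀ ℂ :=
  ∑ k ∈ range N, ∑ l ∈ range N, Finsupp.single ((k : ℤ) - l) 1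

lemma trigPoly_fejerCoeffs (N : ℕ) (x : ℝ) :
    trigPoly (fejerCoeffs N) x = ((‖charSum N x‖ ^ 2 : ℝ) : ℂ) := by
  rw [← Complex.normSq_eq_norm_sq, ← Complex.mul_conj, charSum, map_sum, Finset.sum_mul_sum]
  simp_rw [fejerCoeffs, trigPoly_finsetSum, trigPoly_single, one_mul, torusChar_mul_conj]

lemma fejerCoeffs_zero (N : ℕ) : fejerCoeffs N 0 = N := by
  simp [fejerCoeffs, Finsupp.single_apply, sub_eq_zero, filter_true_of_mem fun _ h => mem_range.1 h]

lemma support_fejerCoeffs_subset (N : ℕ) : (fejerCoeffs N).support ⊆ Ioo (-(N : ℤ)) N := by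
  classical
  refine Finsupp.support_finsetSum.trans <| biUnion_subset.2 fun k hk =>
    Finsupp.support_finsetSum.trans <| biUnion_subset.2 fun l hl =>
      Finsupp.support_single_subset.trans ?_
  simp only [mem_range] at hk hl
  simp only [singleton_subset_iff, mem_Ioo]
  omega

lemma cube_le_two_mul_tsum_norm_fejerCoeffs_sq (N : ℕ) :
    (N : ℝ) ^ 3 ≤ 2 * ∑' n, ‖fejerCoeffs N n‖ ^ 2 := by
  rcases N.eq_zero_or_pos with rfl | hN
  · norm_num; positivity
  have hsum : ∑ n ∈ (fejerCoeffs N).support, fejerCoeffs N n = ((N ^ 2 : ℝ) : ℂ) := by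
    rw [← trigPoly_zero_right, trigPoly_fejerCoeffs, charSum_zero_right, Complex.norm_natCast]
  have hcard : (#(fejerCoeffs N).support : ℝ) ≤ 2 * N := by
    have := card_le_card (support_fejerCoeffs_subset N)
    rw [Int.card_Ioo] at this
    exact_mod_cast this.trans (by omega)
  have hCS := sq_norm_sum_support_le_card_mul_tsum (fejerCoeffs N)
  rw [hsum, Complex.norm_real, Real.norm_of_nonneg (by positivity)] at hCS
  have hN' : (0 : ℝ) < N := by exact_mod_cast hN
  calc (N : ℝ) ^ 3 = ((N : ℝ) ^ 2) ^ 2 / N := by field_simp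
    _ ≤ #(fejerCoeffs N).support * (∑' n, ‖fejerCoeffs N n‖ ^ 2) / N := by gcongr
    _ ≤ 2 * N * (∑' n, ‖fejerCoeffs N n‖ ^ 2) / N := by gcongr
    _ = 2 * ∑' n, ‖fejerCoeffs N n‖ ^ 2 := by field_simp

lemma eLpNorm_rpow_le_of_norm_le {α E : Type*} [MeasurableSpace α] [NormedAddCommGroup E]
    {μ : Measure α} {f : α → E} {M : ℝ} (hM : ∀ x, ‖f x‖ ≤ M) {p : ℝ≥0∞} (hp : 1 ≤ p)
    (hp_top : p ≠ ⊤) :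
    eLpNorm f p μ ^ p.toReal ≤ ENNReal.ofReal M ^ (p.toReal - 1) * eLpNorm f 1 μ := by
  have hp0 : p ≠ 0 := (zero_lt_one.trans_le hp).ne'
  have hs : 1 ≤ p.toReal := by simpa using ENNReal.toReal_mono hp_top hp
  rw [eLpNorm_eq_lintegral_rpow_enorm_toReal hp0 hp_top, ← ENNReal.rpow_mul,
    one_div_mul_cancel (by positivity), ENNReal.rpow_one, eLpNorm_one_eq_lintegral_enorm,
    ← lintegral_const_mul' _ _ (ENNReal.rpow_ne_top_of_nonneg (by linarith) ENNReal.ofReal_ne_top)]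
  refine lintegral_mono fun x => ?_
  have hfM : ‖f x‖ₑ ≤ ENNReal.ofReal M := by
    rw [← ofReal_norm]; exact ENNReal.ofReal_le_ofReal (hM x)
  calc ‖f x‖ₑ ^ p.toReal = ‖f x‖ₑ ^ (p.toReal - 1 + 1) := by rw [sub_add_cancel]
    _ = ‖f x‖ₑ ^ (p.toReal - 1) * ‖f x‖ₑ := by
        rw [ENNReal.rpow_add_of_nonneg _ _ (by linarith) zero_le_one, ENNReal.rpow_one]
    _ ≤ ENNReal.ofReal M ^ (p.toReal - 1) * ‖f x‖ₑ := by gcongr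

lemma eLpNorm_one_trigPoly_fejerCoeffs (N : ℕ) :
    eLpNorm (trigPoly (fejerCoeffs N)) 1 torusMeasure = N := by
  have hint : ∫ x, ‖charSum N x‖ ^ 2 ∂torusMeasure = N := by
    have := integral_trigPoly (fejerCoeffs N)
    simp_rw [trigPoly_fejerCoeffs, integral_complex_ofReal, fejerCoeffs_zero] at this
    exact_mod_cast this
  rw [eLpNorm_one_eq_lintegral_enorm,
    ← ofReal_integral_norm_eq_lintegral_enorm (integrable_trigPoly _)]
  simp_rw [trigPoly_fejerCoeffs, Complex.norm_real, Real.norm_of_nonneg (sq_nonneg _), hint,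
    ENNReal.ofReal_natCast]

lemma eLpNorm_trigPoly_fejerCoeffs_le (N : ℕ) {p : ℝ≥0∞} (hp : 1 ≤ p) (hp_top : p ≠ ⊤) :
    eLpNorm (trigPoly (fejerCoeffs N)) p torusMeasure ≤
      ENNReal.ofReal ((N : ℝ) ^ (2 - 1 / p.toReal)) := by
  have hs : 1 ≤ p.toReal := by simpa using ENNReal.toReal_mono hp_top hp
  have hbound : ∀ x, ‖trigPoly (fejerCoeffs N) x‖ ≤ (N : ℝ) ^ 2 := fun x => by
    rw [trigPoly_fejerCoeffs, Complex.norm_real, Real.norm_of_nonneg (sq_nonneg _)]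
    gcongr
    exact norm_charSum_le N x
  rw [← ENNReal.rpow_le_rpow_iff (z := p.toReal) (by positivity)]
  refine (eLpNorm_rpow_le_of_norm_le hbound hp hp_top).trans_eq ?_
  rw [eLpNorm_one_trigPoly_fejerCoeffs, ← ENNReal.ofReal_natCast,
    ENNReal.ofReal_rpow_of_nonneg (by positivity) (by linarith),
    ← ENNReal.ofReal_mul (by positivity),
    ENNReal.ofReal_rpow_of_nonneg (by positivity) (by positivity)]
  congr 1
  rw [← Real.rpow_natCast, ← Real.rpow_mul (Nat.cast_nonneg _), ← Real.rpow_mul (Nat.cast_nonneg _),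
    ← Real.rpow_add_one' (Nat.cast_nonneg _) (by push_cast; linarith)]
  congr 1
  field_simp
  push_cast
  ring

lemma le_of_forall_natCast_rpow_le_mul_rpow {α β c : ℝ}
    (h : ∀ N : ℕ, 1 ≤ N → (N : ℝ) ^ α ≤ c * (N : ℝ) ^ β) : α ≤ β := by
  by_contra! hβα
  have htends : Tendsto (fun N : ℕ => (N : ℝ) ^ (α - β)) atTop atTop :=
    (tendsto_rpow_atTop (sub_pos.2 hβα)).comp tendsto_natCast_atTop_atTop
  obtain ⟨N, hNc, hN1⟩ := ((htends.eventually_gt_atTop c).and (eventually_ge_atTop 1)).exists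
  have hN : (0 : ℝ) < N := by exact_mod_cast hN1
  have hsplit : (N : ℝ) ^ α = (N : ℝ) ^ (α - β) * (N : ℝ) ^ β := by
    rw [← Real.rpow_add hN, sub_add_cancel]
  have := h N hN1
  rw [hsplit] at this
  exact (mul_lt_mul_of_pos_right hNc (Real.rpow_pos_of_pos hN β)).not_ge this

lemma two_le_of_sqrt_tsum_norm_sq_le_eLpNorm {p : ℝ≥0∞} (hp : 1 ≤ p) (C : ℝ≥0)
    (h : ∀ a : ℤ →₀ ℂ,
      ENNReal.ofReal √(∑' n, ‖a n‖ ^ 2) ≤ C * eLpNorm (trigPoly a) p torusMeasure) :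
    2 ≤ p := by
  by_contra! hp2
  have hp_top : p ≠ ⊤ := hp2.ne_top
  have hs1 : 1 ≤ p.toReal := by simpa using ENNReal.toReal_mono hp_top hp
  have hs2 : p.toReal < 2 := by simpa using ENNReal.toReal_strict_mono ENNReal.ofNat_ne_top hp2
  have hgrowth : ∀ N : ℕ, 1 ≤ N →
      (N : ℝ) ^ (3 : ℝ) ≤ 2 * C ^ 2 * (N : ℝ) ^ ((2 - 1 / p.toReal) * 2) := by
    intro N _
    have hsqrt : √(∑' n, ‖fejerCoeffs N n‖ ^ 2) ≤ C * (N : ℝ) ^ (2 - 1 / p.toReal) := by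
      rw [← ENNReal.ofReal_le_ofReal_iff (by positivity), ENNReal.ofReal_mul C.coe_nonneg,
        ENNReal.ofReal_coe_nnreal]
      exact (h _).trans (by gcongr; exact eLpNorm_trigPoly_fejerCoeffs_le N hp hp_top)
    calc (N : ℝ) ^ (3 : ℝ) = (N : ℝ) ^ 3 := by norm_cast
      _ ≤ 2 * ∑' n, ‖fejerCoeffs N n‖ ^ 2 := cube_le_two_mul_tsum_norm_fejerCoeffs_sq N
      _ ≤ 2 * (C * (N : ℝ) ^ (2 - 1 / p.toReal)) ^ 2 := by
        gcongr; exact (Real.sqrt_le_left (by positivity)).1 hsqrt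
      _ = 2 * C ^ 2 * (N : ℝ) ^ ((2 - 1 / p.toReal) * 2) := by
        rw [mul_pow, ← mul_assoc, ← Real.rpow_mul_natCast (Nat.cast_nonneg _)]
        norm_num
  have hexp := le_of_forall_natCast_rpow_le_mul_rpow hgrowth
  have : 1 / 2 < 1 / p.toReal := one_div_lt_one_div_of_lt (by linarith) hs2
  linarith

lemma SnOp_single_zero_right (a : ℤ →₀ ℂ) (n : ℤ) (x : ℝ) :
    SnOp a (Finsupp.single 0 1) n x = a n * torusChar n x := by
  simp [SnOp, torusChar]

lemma SnOp_single_zero_left (b : ℤ →₀ ℂ) (n : ℤ) (x : ℝ) :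
    SnOp (Finsupp.single 0 1) b n x = b (-n) * torusChar (-n) x := by
  simp [SnOp, torusChar, neg_eq_iff_eq_neg]

lemma tsum_norm_SnOp_single_zero_right_sq (a : ℤ →₀ ℂ) (x : ℝ) :
    ∑' n, ‖SnOp a (Finsupp.single 0 1) n x‖ ^ 2 = ∑' n, ‖a n‖ ^ 2 := by
  simp [SnOp_single_zero_right]

lemma tsum_norm_SnOp_single_zero_left_sq (b : ℤ →₀ ℂ) (x : ℝ) :
    ∑' n, ‖SnOp (Finsupp.single 0 1) b n x‖ ^ 2 = ∑' n, ‖b n‖ ^ 2 := by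
  simp [SnOp_single_zero_left, tsum_comp_neg fun n => ‖b n‖ ^ 2]

lemma eLpNorm_const_of_isProbabilityMeasure {α ε : Type*} [MeasurableSpace α] [TopologicalSpace ε]
    [ContinuousENorm ε] {μ : Measure α} [IsProbabilityMeasure μ] (c : ε) {p : ℝ≥0∞} (hp : p ≠ 0) :
    eLpNorm (fun _ : α => c) p μ = ‖c‖ₑ := by
  simp [eLpNorm_const c hp (IsProbabilityMeasure.ne_zero μ)]

lemma eLpNorm_trigPoly_single_zero_one {p : ℝ≥0∞} (hp : p ≠ 0) :
    eLpNorm (trigPoly (Finsupp.single 0 1)) p torusMeasure = 1 := by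
  have : trigPoly (Finsupp.single 0 1) = fun _ => 1 := funext fun x => by simp [trigPoly_single]
  simp [this, eLpNorm_const_of_isProbabilityMeasure _ hp]

theorem torus_squareFunction_necessary_general (p q r : ℝ≥0∞)
    (hp : 1 ≤ p) (hq : 1 ≤ q) (hr : 1 ≤ r)
    (h : ∃ C : ℝ, 0 < C ∧ ∀ a b : ℤ →₀ ℂ,
      eLpNorm (fun x : ℝ => Real.sqrt (∑' n : ℤ, ‖SnOp a b n x‖ ^ 2))
          r torusMeasure ≤
        ENNReal.ofReal C * eLpNorm (trigPoly a) p torusMeasure *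
          eLpNorm (trigPoly b) q torusMeasure) :
    2 ≤ p ∧ 2 ≤ q := by
  obtain ⟨C, -, hC⟩ := h
  have hr0 : r ≠ 0 := (zero_lt_one.trans_le hr).ne'
  constructor
  · refine two_le_of_sqrt_tsum_norm_sq_le_eLpNorm hp C.toNNReal fun a => ?_
    have := hC a (Finsupp.single 0 1)
    simp_rw [tsum_norm_SnOp_single_zero_right_sq, eLpNorm_const_of_isProbabilityMeasure _ hr0,
      Real.enorm_eq_ofReal (Real.sqrt_nonneg _),
      eLpNorm_trigPoly_single_zero_one (zero_lt_one.trans_le hq).ne', mul_one] at this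
    exact this
  · refine two_le_of_sqrt_tsum_norm_sq_le_eLpNorm hq C.toNNReal fun b => ?_
    have := hC (Finsupp.single 0 1) b
    simp_rw [tsum_norm_SnOp_single_zero_left_sq, eLpNorm_const_of_isProbabilityMeasure _ hr0,
      Real.enorm_eq_ofReal (Real.sqrt_nonneg _),
      eLpNorm_trigPoly_single_zero_one (zero_lt_one.trans_le hp).ne', mul_one] at this
    exact this

/-- Necessity of $p, q ≥ 2$ for the boundedness of the bilinear Littlewood–Paley
square function on the torus. -/
theorem torus_squareFunction_necessary (p q r : ℝ≥0∞)
    (hp : 1 ≤ p) (hptop : p ≠ ⊤) (hq : 1 ≤ q) (hqtop : q ≠ ⊤)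
    (hr : 1 ≤ r) (hrtop : r ≠ ⊤) (hpqr : 1 / p + 1 / q = 1 / r)
    (h : ∃ C : ℝ, 0 < C ∧ ∀ a b : ℤ →₀ ℂ,
      eLpNorm (fun x : ℝ => Real.sqrt (∑' n : ℤ, ‖SnOp a b n x‖ ^ 2))
          r torusMeasure ≤
        ENNReal.ofReal C * eLpNorm (trigPoly a) p torusMeasure *
          eLpNorm (trigPoly b) q torusMeasure) :
    2 ≤ p ∧ 2 ≤ q :=
  torus_squareFunction_necessary_general p q r hp hq hr h
end
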